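/- Let H be the digraph with vertex set {1,2,3,4} and arc set {12, 21, 23, 32, 34, 41} (a copy of C4''). Given a digraph D, let D' be the digraph obtained from D by replacing every arc uv of D with the gadget consisting of one new vertex x_{uv} and the two arcs u→x_{uv}, x_{uv}→v (so D' has no arcs between vertices of D, and the gadget vertices of different arcs are distinct). Define costs on D': for every t ∈ V(D), c_4(t) = 0 and c_1(t) = c_2(t) = c_3(t) = 1; all costs of the gadget vertices are 0. Then a homomorphism of D' to H exists, and the minimum cost of a homomorphism of D' to H equals |V(D)| − α(D). -/

import Mathlib

/-!
The only arc out of vertex 4 of `H` goes to 1 and the only arc into 4 comes from 3, so in a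
homomorphism `D' → H` no gadget vertex `x_uv` can sit between two vertices of `D` mapped to 4:
the vertices of `D` mapped to 4 form an independent set. Conversely an independent set `S` gives
a homomorphism sending `S` to 4, the other vertices of `D` to 2, and `x_uv` to 3 or 1 according
as `v ∈ S`. Since the cost of a homomorphism is the number of vertices of `D` not mapped to 4,
the minimum cost is `|V(D)| - α(D)`.
-/

namespace MinHomC4PP

/-- the target digraph: vertices 1,2,3,4 (as 0,1,2,3 : Fin 4) and arcs
{12, 21, 23, 32, 34, 41}; a copy of C4''. -/
def HArc : Fin 4 → Fin 4 → Prop := fun a b =>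
  (a, b) ∈ ([(0,1),(1,0),(1,2),(2,1),(2,3),(3,0)] : List (Fin 4 × Fin 4))

/-- vertex set of D': the vertices of D together with one gadget vertex x_{uv}
for every arc e = uv of D. -/
abbrev GV (α : Type*) (Ad : α → α → Prop) : Type _ :=
  α ⊕ {p : α × α // Ad p.1 p.2}

/-- arcs of D': for each arc e = uv of D, the gadget arcs u→x_e and x_e→v. -/
def GArc {α : Type*} (Ad : α → α → Prop) : GV α Ad → GV α Ad → Prop
  | Sum.inl u, Sum.inr e => u = e.1.1
  | Sum.inr e, Sum.inl v => v = e.1.2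
  | _, _ => False

/-- costs: c_4(t) = 0 and c_1(t) = c_2(t) = c_3(t) = 1 for t ∈ V(D) (vertex 4 is
index 3 : Fin 4); all costs of gadget vertices are 0. -/
def cost {α : Type*} (Ad : α → α → Prop) : Fin 4 → GV α Ad → ℕ
  | h, Sum.inl _ => if h = 3 then 0 else 1
  | _, Sum.inr _ => 0

open Finset

instance : DecidableRel HArc := fun a b => by unfold HArc; infer_instance

theorem HArc.eq_zero_of_three_left : ∀ c : Fin 4, HArc 3 c → c = 0 := by decide

theorem HArc.eq_two_of_three_right : ∀ c : Fin 4, HArc c 3 → c = 2 := by decide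

theorem Finset.exists_isGreatest_card {α : Type*} [Fintype α] (P : Finset α → Prop)
    (hP : ∃ S, P S) : ∃ m, IsGreatest {n : ℕ | ∃ S : Finset α, P S ∧ S.card = n} m := by
  refine BddAbove.exists_isGreatest_of_nonempty ⟨Fintype.card α, ?_⟩ ?_
  · rintro n ⟨S, -, rfl⟩
    exact S.card_le_univ
  · obtain ⟨S, hS⟩ := hP
    exact ⟨S.card, S, hS, rfl⟩

section

variable {α : Type*} (Ad : α → α → Prop)

def IsIndep (S : Finset α) : Prop := ∀ a ∈ S, ∀ b ∈ S, a ≠ b → ¬ Ad a b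

def IsHom (f : GV α Ad → Fin 4) : Prop := ∀ x y, GArc Ad x y → HArc (f x) (f y)

theorem sum_cost_eq [Fintype α] [DecidableRel Ad] (f : GV α Ad → Fin 4) :
    ∑ w, cost Ad (f w) w = Fintype.card α - #{a | f (Sum.inl a) = 3} := by
  have hcard := card_filter_add_card_filter_not
    (s := univ) (fun a => f (Sum.inl a) = 3)
  rw [card_univ] at hcard
  rw [Fintype.sum_sum_type, ← hcard, Nat.add_sub_cancel_left, card_filter]
  simp only [cost, sum_const_zero, add_zero, ite_not]

noncomputable def homOfIndep (S : Finset α) : GV α Ad → Fin 4 := by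
  classical
  exact fun
    | .inl a => if a ∈ S then 3 else 1
    | .inr e => if e.1.2 ∈ S then 2 else 0

theorem homOfIndep_isHom (hirr : Irreflexive Ad) {S : Finset α} (hS : IsIndep Ad S) :
    IsHom Ad (homOfIndep Ad S) := by
  rintro (u | e) (v | e') h <;> simp only [GArc] at h
  · subst h
    have tail_notMem : e'.1.1 ∈ S → e'.1.2 ∉ S := fun h1 h2 =>
      hS _ h1 _ h2 (fun h => hirr _ (h ▸ e'.2)) e'.2
    by_cases h1 : e'.1.1 ∈ S
    · simp only [homOfIndep, h1, tail_notMem h1, if_true, if_false]; decide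
    · by_cases h2 : e'.1.2 ∈ S <;> simp only [homOfIndep, h1, h2, if_true, if_false] <;> decide
  · subst h
    by_cases h2 : e.1.2 ∈ S <;> simp only [homOfIndep, h2, if_true, if_false] <;> decide

theorem card_filter_homOfIndep_eq_three [Fintype α] (S : Finset α) :
    #{a | homOfIndep Ad S (Sum.inl a) = 3} = S.card := by
  classical
  congr 1
  ext a
  by_cases h : a ∈ S <;> simp [homOfIndep, h]

theorem IsHom.isIndep_filter_eq_three [Fintype α] {f : GV α Ad → Fin 4} (hf : IsHom Ad f) :
    IsIndep Ad {a | f (Sum.inl a) = 3} := by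
  intro a ha b hb _ hab
  simp only [mem_filter, mem_univ, true_and] at ha hb
  let e : {p : α × α // Ad p.1 p.2} := ⟨(a, b), hab⟩
  have h0 := HArc.eq_zero_of_three_left _ (ha ▸ hf (.inl a) (.inr e) rfl)
  have h2 := HArc.eq_two_of_three_right _ (hb ▸ hf (.inr e) (.inl b) rfl)
  exact absurd (h0.symm.trans h2) (by decide)

end

theorem stmt14_general {α : Type*} [Fintype α]
    (Ad : α → α → Prop) [DecidableRel Ad] (hirr : Irreflexive Ad) :
    ∃ m : ℕ,
      IsGreatest {n : ℕ | ∃ S : Finset α,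
        (∀ a ∈ S, ∀ b ∈ S, a ≠ b → ¬ Ad a b) ∧ S.card = n} m ∧
      (∃ f : GV α Ad → Fin 4, ∀ x y, GArc Ad x y → HArc (f x) (f y)) ∧
      IsLeast {n : ℕ | ∃ f : GV α Ad → Fin 4,
          (∀ x y, GArc Ad x y → HArc (f x) (f y)) ∧ (∑ w, cost Ad (f w) w) = n}
        (Fintype.card α - m) := by
  obtain ⟨m, hm⟩ := Finset.exists_isGreatest_card (IsIndep Ad) ⟨∅, by simp [IsIndep]⟩
  obtain ⟨S, hS, rfl⟩ := hm.1
  refine ⟨S.card, hm, ⟨_, homOfIndep_isHom Ad hirr hS⟩,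
    ⟨⟨_, homOfIndep_isHom Ad hirr hS, ?_⟩, ?_⟩⟩
  · rw [sum_cost_eq, card_filter_homOfIndep_eq_three]
  · rintro n ⟨f, hf, rfl⟩
    rw [sum_cost_eq]
    exact Nat.sub_le_sub_left (hm.2 ⟨_, IsHom.isIndep_filter_eq_three Ad hf, rfl⟩) _

/-- Lemma 4.2: a homomorphism of D' to H exists, and the minimum cost of a homomorphism
of D' to H equals |V(D)| − α(D). -/
theorem stmt14 {α : Type*} [Fintype α] [DecidableEq α]
    (Ad : α → α → Prop) [DecidableRel Ad] (hirr : Irreflexive Ad) :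
    ∃ m : ℕ,
      IsGreatest {n : ℕ | ∃ S : Finset α,
        (∀ a ∈ S, ∀ b ∈ S, a ≠ b → ¬ Ad a b) ∧ S.card = n} m ∧
      (∃ f : GV α Ad → Fin 4, ∀ x y, GArc Ad x y → HArc (f x) (f y)) ∧
      IsLeast {n : ℕ | ∃ f : GV α Ad → Fin 4,
          (∀ x y, GArc Ad x y → HArc (f x) (f y)) ∧ (∑ w, cost Ad (f w) w) = n}
        (Fintype.card α - m) :=
  stmt14_general Ad hirr

end MinHomC4PP
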